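/- Let $G$ be a finite group, $k$ an algebraically closed field of characteristic $p>0$, and $kG$ the group algebra with the symmetrizing form $(g,h)=\delta_{g,h^{-1}}$. Then for every $n\ge 0$, the Külshammer ideal $T_n^\perp(kG)$ has $k$-basis $\{(C^{p^{-n}})^+ : C \in \mathcal{C}l(G)\}$ where $C^{p^{-n}}=\{g\in G : g^{p^n}\in C\}$ and $X^+=\sum_{x\in X}x$ (omitting the zero elements corresponding to classes $C$ with $C^{p^{-n}}=\emptyset$). -/

import Mathlib

open scoped Classical

/-- The commutator subspace `K(A)`: the `k`-span of all commutators `a*b - b*a`. -/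
def commutatorSpan (k A : Type*) [Field k] [Ring A] [Algebra k A] : Submodule k A :=
  Submodule.span k {x : A | ∃ a b : A, x = a * b - b * a}

/-- The symmetrizing form of a group algebra: `(x, y) ↦` the coefficient of `1` in `x * y`;
on group elements this is `(g, h) = δ_{g, h⁻¹}`. -/
noncomputable def groupForm {k G : Type*} [Field k] [Group G]
    (x y : MonoidAlgebra k G) : k := (x * y).coeff 1

/-- The sum `(C^{p^{-n}})^+ = ∑_{g : g^{p^n} ∈ C} g` in the group algebra,
for a conjugacy class `C` of `G`. -/
noncomputable def classRootSum (k : Type*) {G : Type*} [Field k] [Group G] [Fintype G]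
    (p n : ℕ) (C : ConjClasses G) : MonoidAlgebra k G :=
  ∑ g ∈ Finset.univ.filter (fun g : G => ConjClasses.mk (g ^ p ^ n) = C),
    MonoidAlgebra.single g (1 : k)

/-!
Modulo the commutator subspace, `p^n`-th powers are additive: expanding `(∑ aᵢ)^{p^n}` into words
of length `p^n`, a cyclic rotation of a word does not change its product modulo commutators, and the
non-constant words fall into rotation orbits whose length is divisible by `p`. In `kG` this gives
`y^{p^n} ≡ ∑ y_g^{p^n} g^{p^n}`; as `K(kG)` consists of the elements whose coefficient sum over every
conjugacy class vanishes, `T_n(kG)` is the kernel of `y ↦ ∑_g y_g [g^{p^n}] ∈ k[Cl(G)]`. Under the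
form, the orthogonal of this kernel is spanned by the fibre sums `∑_{g^{p^n} ∈ C} g⁻¹`, which are
again of the form `(C'^{p^{-n}})^+` (with `C' = C⁻¹`), and these have pairwise disjoint supports.
-/

open Finset

section FixedPoints
variable {α : Type*} [DecidableEq α] {p : ℕ} [Fact p.Prime]

lemma Equiv.Perm.card_modEq_card_filter_fixed {σ : Equiv.Perm α} {N : ℕ} (hσ : σ ^ p ^ N = 1)
    (s : Finset α) (hs : ∀ a, σ a ∈ s ↔ a ∈ s) :
    #s ≡ #{a ∈ s | σ a = a} [MOD p] := by
  set τ : Equiv.Perm s := σ.subtypePerm hs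
  have hτ : τ ^ p ^ N = 1 := by
    rw [Equiv.Perm.subtypePerm_pow]
    ext
    simp [hσ]
  have hfix : #τ.supportᶜ = #{a ∈ s | σ a = a} := by
    rw [← card_map (Function.Embedding.subtype _)]
    congr 1
    ext a
    simp [τ, and_comm]
  rw [← hfix, ← Fintype.card_coe s]
  exact (Equiv.Perm.card_compl_support_modEq hτ).symm

theorem Equiv.Perm.sum_eq_sum_filter_fixed [Fintype α] {R M : Type*} [Ring R] [CharP R p]
    [AddCommGroup M] [Module R M] {σ : Equiv.Perm α} {N : ℕ} (hσ : σ ^ p ^ N = 1) (F : α → M)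
    (hF : ∀ a, F (σ a) = F a) :
    ∑ a, F a = ∑ a with σ a = a, F a := by
  have hmaps : ∀ a ∈ ({a | σ a = a} : Finset α), F a ∈ univ.image F := by simp
  rw [← sum_fiberwise_of_maps_to (fun a _ => mem_image_of_mem F (mem_univ a)),
    ← sum_fiberwise_of_maps_to hmaps]
  refine sum_congr rfl fun v _ => ?_
  -- on the fibre `F = v` both sides count points, and the two counts agree modulo `p`
  rw [sum_congr rfl fun a ha => (mem_filter.1 ha).2, sum_congr rfl fun a ha => (mem_filter.1 ha).2,
    sum_const, sum_const, ← Nat.cast_smul_eq_nsmul R, ← Nat.cast_smul_eq_nsmul R,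
    (CharP.natCast_eq_natCast R p).2 (card_modEq_card_filter_fixed hσ _ fun a => by simp [hF])]
  simp only [filter_filter, and_comm]

end FixedPoints

section Words
variable {ι : Type*} {m : ℕ} [NeZero m]
open Fin.NatCast

def rotateWord : Equiv.Perm (Fin m → ι) := (Equiv.addRight 1).symm.arrowCongr (Equiv.refl ι)

@[simp] lemma rotateWord_apply (w : Fin m → ι) (i : Fin m) : rotateWord w i = w (i + 1) := rfl

lemma rotateWord_pow_apply (j : ℕ) (w : Fin m → ι) (i : Fin m) :
    (rotateWord ^ j) w i = w (i + (j : Fin m)) := by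
  induction j generalizing w with
  | zero => simp
  | succ j ih =>
    rw [pow_succ, Equiv.Perm.mul_apply, ih, rotateWord_apply, Nat.cast_succ, add_assoc]

lemma rotateWord_pow_self : (rotateWord : Equiv.Perm (Fin m → ι)) ^ m = 1 := by
  ext w i
  simp [rotateWord_pow_apply]

lemma eq_const_of_rotateWord_eq {w : Fin m → ι} (hw : rotateWord w = w) :
    w = Function.const _ (w 0) := by
  funext i
  have := congrFun (Equiv.Perm.pow_apply_eq_self_of_apply_eq_self hw i.val) 0
  rwa [rotateWord_pow_apply, zero_add, Fin.cast_val_eq_self] at this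

lemma exists_prod_ofFn_eq_mul_and_rotateWord {M : Type*} [Monoid M] (w : Fin m → M) :
    ∃ u t : M, (List.ofFn w).prod = u * t ∧ (List.ofFn (rotateWord w)).prod = t * u := by
  obtain ⟨m, rfl⟩ := Nat.exists_eq_succ_of_ne_zero (NeZero.ne m)
  refine ⟨w 0, (List.ofFn fun i : Fin m => w i.succ).prod, by rw [List.ofFn_succ, List.prod_cons],
    ?_⟩
  rw [List.ofFn_succ', List.prod_concat]
  simp [Fin.coeSucc_eq_succ, Fin.last_add_one]

end Words

lemma sum_pow_eq_sum_prod_ofFn {A ι : Type*} [Semiring A] [Fintype ι] (f : ι → A) (m : ℕ) :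
    (∑ i, f i) ^ m = ∑ w : Fin m → ι, (List.ofFn (f ∘ w)).prod := by
  induction m with
  | zero => simp
  | succ m ih =>
    rw [pow_succ', ih, sum_mul_sum, ← (Fin.consEquiv fun _ => ι).sum_comp, Fintype.sum_prod_type]
    simp [Fin.consEquiv, List.ofFn_succ, Function.comp_def]

section CommutatorSpan
variable {k A : Type*} [Field k] [Ring A] [Algebra k A]

lemma mul_sub_mul_mem_commutatorSpan (a b : A) : a * b - b * a ∈ commutatorSpan k A :=
  Submodule.subset_span ⟨a, b, rfl⟩

theorem sum_pow_char_pow_sub_sum_pow_mem_commutatorSpan {p : ℕ} [Fact p.Prime] [CharP k p]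
    {ι : Type*} [Fintype ι] (f : ι → A) (n : ℕ) :
    (∑ i, f i) ^ p ^ n - ∑ i, f i ^ p ^ n ∈ commutatorSpan k A := by
  have : NeZero (p ^ n) := ⟨pow_ne_zero n (Fact.out : p.Prime).ne_zero⟩
  let π := (commutatorSpan k A).mkQ
  let F (w : Fin (p ^ n) → ι) : A ⧸ commutatorSpan k A := π (List.ofFn (f ∘ w)).prod
  have hF (w : Fin (p ^ n) → ι) : F (rotateWord w) = F w := by
    obtain ⟨u, t, hw, hrot⟩ := exists_prod_ofFn_eq_mul_and_rotateWord (f ∘ w)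
    change π (List.ofFn (rotateWord (f ∘ w))).prod = π (List.ofFn (f ∘ w)).prod
    rw [hrot, hw]
    exact (Submodule.Quotient.eq _).2 (mul_sub_mul_mem_commutatorSpan t u)
  have hconst : ∀ w ∈ ({w | rotateWord w = w} : Finset (Fin (p ^ n) → ι)),
      Function.const _ (w 0) = w :=
    fun w hw => (eq_const_of_rotateWord_eq (mem_filter.1 hw).2).symm
  have hfixed : ∑ w with rotateWord w = w, F w = ∑ i, F (Function.const _ i) :=
    sum_nbij' (· 0) (Function.const _) (by simp) (fun i _ => by simp [funext_iff]) hconst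
      (by simp) fun w hw => by rw [hconst w hw]
  rw [← Submodule.Quotient.mk_eq_zero, Submodule.Quotient.mk_sub, sub_eq_zero]
  calc π ((∑ i, f i) ^ p ^ n)
      = ∑ w, F w := by rw [sum_pow_eq_sum_prod_ofFn, map_sum]
    _ = ∑ w with rotateWord w = w, F w :=
      Equiv.Perm.sum_eq_sum_filter_fixed (R := k) rotateWord_pow_self F hF
    _ = ∑ i, F (Function.const _ i) := hfixed
    _ = π (∑ i, f i ^ p ^ n) := by simp [F, List.ofFn_const, Function.comp_def]

end CommutatorSpan

lemma IsConj.inv {G : Type*} [Group G] {a b : G} (h : IsConj a b) : IsConj a⁻¹ b⁻¹ := by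
  obtain ⟨c, rfl⟩ := isConj_iff.1 h
  exact isConj_iff.2 ⟨c, conj_inv.symm⟩

lemma ConjClasses.mk_inv_eq_mk_inv_iff {G : Type*} [Group G] {a b : G} :
    ConjClasses.mk a⁻¹ = ConjClasses.mk b⁻¹ ↔ ConjClasses.mk a = ConjClasses.mk b := by
  simp only [ConjClasses.mk_eq_mk_iff_isConj]
  exact ⟨fun h => by simpa using h.inv, IsConj.inv⟩

namespace MonoidAlgebra

lemma coeff_mapDomainLinearMap_apply {k G β : Type*} [Semiring k] [Fintype G] [DecidableEq β]
    (f : G → β) (x : MonoidAlgebra k G) (b : β) :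
    (mapDomainLinearMap k k f x).coeff b = ∑ g with f g = b, x.coeff g := by
  induction x using MonoidAlgebra.induction_linear with
  | zero => simp
  | add x y hx hy => rw [map_add, coeff_add, Finsupp.add_apply, hx, hy, ← sum_add_distrib]; rfl
  | single g r => simp [Finsupp.single_apply]

lemma sum_single_coeff {k G : Type*} [Semiring k] [Fintype G] (x : MonoidAlgebra k G) :
    ∑ g, single g (x.coeff g) = x := by
  conv_rhs => rw [← x.sum_coeff_single]
  exact (Finsupp.sum_fintype _ _ (by simp)).symm

variable {k G : Type*} [Field k] [Group G]

lemma mapDomain_conjClassesMk_mul_comm (a b : MonoidAlgebra k G) :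
    mapDomainLinearMap k k ConjClasses.mk (a * b)
      = mapDomainLinearMap k k ConjClasses.mk (b * a) := by
  have : (LinearMap.mul k (MonoidAlgebra k G)).compr₂ (mapDomainLinearMap k k ConjClasses.mk)
      = (LinearMap.mul k (MonoidAlgebra k G)).flip.compr₂
          (mapDomainLinearMap k k ConjClasses.mk) := by
    ext g h
    simp [ConjClasses.mk_eq_mk_iff_isConj.2 (isConj_iff.2 ⟨h, by group⟩ : IsConj (g * h) (h * g))]
  exact congr($this a b)

lemma sub_mapDomain_rep_mem_commutatorSpan (x : MonoidAlgebra k G) :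
    x - mapDomainLinearMap k k (Function.surjInv ConjClasses.mk_surjective ∘ ConjClasses.mk) x
      ∈ commutatorSpan k (MonoidAlgebra k G) := by
  induction x using MonoidAlgebra.induction_linear with
  | zero => simp
  | add x y hx hy => simpa [add_sub_add_comm] using add_mem hx hy
  | single g r =>
    rw [mapDomainLinearMap_single, Function.comp_apply]
    obtain ⟨c, hc⟩ := isConj_iff.1 (ConjClasses.mk_eq_mk_iff_isConj.1
      (Function.surjInv_eq ConjClasses.mk_surjective (ConjClasses.mk g)))
    generalize Function.surjInv _ (ConjClasses.mk g) = s at hc ⊢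
    subst hc
    convert mul_sub_mul_mem_commutatorSpan (single c r) (single (s * c⁻¹) (1 : k)) using 1
    simp [single_mul_single, mul_assoc]

theorem commutatorSpan_eq_ker_mapDomain :
    commutatorSpan k (MonoidAlgebra k G)
      = LinearMap.ker (mapDomainLinearMap k k (ConjClasses.mk : G → ConjClasses G)) := by
  refine le_antisymm (Submodule.span_le.2 ?_) fun x hx => ?_
  · rintro _ ⟨a, b, rfl⟩
    simp [mapDomain_conjClassesMk_mul_comm a b]
  · have := sub_mapDomain_rep_mem_commutatorSpan x
    rwa [mapDomainLinearMap_comp, LinearMap.comp_apply, LinearMap.mem_ker.1 hx, map_zero,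
      sub_zero] at this

variable [Fintype G]

lemma mem_commutatorSpan_iff {x : MonoidAlgebra k G} :
    x ∈ commutatorSpan k (MonoidAlgebra k G)
      ↔ ∀ C : ConjClasses G, ∑ g with ConjClasses.mk g = C, x.coeff g = 0 := by
  rw [commutatorSpan_eq_ker_mapDomain, LinearMap.mem_ker, ← coeff_inj]
  simp only [Finsupp.ext_iff, coeff_zero, Finsupp.coe_zero, Pi.zero_apply,
    coeff_mapDomainLinearMap_apply]

theorem pow_char_pow_mem_commutatorSpan_iff {p : ℕ} [Fact p.Prime] [CharP k p]
    (n : ℕ) (y : MonoidAlgebra k G) :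
    y ^ p ^ n ∈ commutatorSpan k (MonoidAlgebra k G)
      ↔ mapDomainLinearMap k k (fun g : G => ConjClasses.mk (g ^ p ^ n)) y = 0 := by
  set w : MonoidAlgebra k G := ∑ g, single (g ^ p ^ n) (y.coeff g ^ p ^ n)
  have hyw : y ^ p ^ n - w ∈ commutatorSpan k (MonoidAlgebra k G) := by
    simpa [single_pow, w, sum_single_coeff] using
      sum_pow_char_pow_sub_sum_pow_mem_commutatorSpan (k := k) (fun g => single g (y.coeff g)) n
  have hw : y ^ p ^ n ∈ commutatorSpan k (MonoidAlgebra k G)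
      ↔ w ∈ commutatorSpan k (MonoidAlgebra k G) :=
    ⟨fun h => by simpa using sub_mem h hyw, fun h => by simpa using add_mem hyw h⟩
  have hsum (C : ConjClasses G) : ∑ t with ConjClasses.mk t = C, w.coeff t
      = (∑ g with ConjClasses.mk (g ^ p ^ n) = C, y.coeff g) ^ p ^ n := by
    simp only [w, coeff_sum, Finsupp.finsetSum_apply, coeff_single, Finsupp.single_apply]
    rw [sum_pow_char_pow, sum_comm, sum_filter]
    exact sum_congr rfl fun g _ => by simp
  rw [hw, mem_commutatorSpan_iff, ← coeff_inj, Finsupp.ext_iff]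
  simp only [coeff_zero, Finsupp.coe_zero, Pi.zero_apply, coeff_mapDomainLinearMap_apply, hsum]
  simp [pow_eq_zero_iff, (Fact.out : p.Prime).ne_zero]

end MonoidAlgebra

section KulshammerIdeal
open MonoidAlgebra
variable {k G : Type*} [Field k] [Group G]

lemma groupForm_eq_zero_of_mem_span {s : Set (MonoidAlgebra k G)} {x y : MonoidAlgebra k G}
    (hs : ∀ z ∈ s, groupForm z y = 0) (hx : x ∈ Submodule.span k s) : groupForm x y = 0 := by
  induction hx using Submodule.span_induction with
  | mem z hz => exact hs z hz
  | zero => simp [groupForm]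
  | add z z' _ _ hz hz' => simp_all [groupForm, add_mul]
  | smul c z _ hz => simp_all [groupForm]

variable [Fintype G] {p : ℕ} (n : ℕ)

lemma coeff_classRootSum (C : ConjClasses G) (g : G) :
    (classRootSum k p n C).coeff g = if ConjClasses.mk (g ^ p ^ n) = C then 1 else 0 := by
  simp [classRootSum, coeff_sum, Finsupp.single_apply]

lemma groupForm_classRootSum (C : ConjClasses G) (y : MonoidAlgebra k G) :
    groupForm (classRootSum k p n C) y
      = ∑ g with ConjClasses.mk (g ^ p ^ n) = C, y.coeff g⁻¹ := by
  simp [groupForm, classRootSum, sum_mul, coeff_sum, coeff_single_mul_apply]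

lemma mem_span_classRootSum_of_factorsThrough {x : MonoidAlgebra k G}
    (hx : Function.FactorsThrough x.coeff (fun g : G => ConjClasses.mk (g ^ p ^ n))) :
    x ∈ Submodule.span k (Set.range (classRootSum k p n)) := by
  have : x = ∑ C, Function.extend (fun g : G => ConjClasses.mk (g ^ p ^ n)) x.coeff 0 C
      • classRootSum k p n C := by
    ext g
    simp [coeff_sum, coeff_classRootSum, hx.extend_apply]
  rw [this]
  exact Submodule.sum_mem _ fun C _ => Submodule.smul_mem _ _ (Submodule.subset_span ⟨C, rfl⟩)

lemma linearIndependent_classRootSum :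
    LinearIndependent k
      (fun C : {C : ConjClasses G // classRootSum k p n C ≠ 0} => classRootSum k p n C.1) := by
  rw [linearIndependent_iff']
  rintro s c hc ⟨C, hC⟩ hCs
  obtain ⟨g, hg⟩ : ∃ g : G, ConjClasses.mk (g ^ p ^ n) = C := by
    by_contra! h
    exact hC (by simp [classRootSum, h])
  have hsub (i : {C : ConjClasses G // classRootSum k p n C ≠ 0}) : C = i.1 ↔ ⟨C, hC⟩ = i :=
    (Subtype.ext_iff (a1 := ⟨C, hC⟩)).symm
  have := congr(($hc).coeff g)
  simp only [coeff_sum, Finsupp.finsetSum_apply, coeff_smul, Finsupp.smul_apply,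
    coeff_classRootSum, hg, smul_eq_mul, mul_ite, mul_one, mul_zero] at this
  simpa [hsub, hCs] using this

variable [Fact p.Prime] [CharP k p]

lemma groupForm_classRootSum_eq_zero {y : MonoidAlgebra k G}
    (hy : y ^ p ^ n ∈ commutatorSpan k (MonoidAlgebra k G)) (C : ConjClasses G) :
    groupForm (classRootSum k p n C) y = 0 := by
  obtain ⟨r, rfl⟩ := ConjClasses.mk_surjective C
  have := congr(($((pow_char_pow_mem_commutatorSpan_iff n y).1 hy)).coeff (ConjClasses.mk r⁻¹))
  rw [coeff_mapDomainLinearMap_apply, coeff_zero, Finsupp.coe_zero, Pi.zero_apply] at this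
  rw [groupForm_classRootSum, ← this]
  -- inversion maps the `p^n`-th roots of the class of `r` onto those of the class of `r⁻¹`
  exact sum_equiv (Equiv.inv G)
    (fun g => by simp [← ConjClasses.mk_inv_eq_mk_inv_iff (a := g ^ p ^ n)]) (by simp)

lemma factorsThrough_coeff_of_forall_groupForm_eq_zero {x : MonoidAlgebra k G}
    (hx : ∀ y, y ^ p ^ n ∈ commutatorSpan k (MonoidAlgebra k G) → groupForm x y = 0) :
    Function.FactorsThrough x.coeff (fun g : G => ConjClasses.mk (g ^ p ^ n)) := by
  intro g g' hgg'
  have hy : (single g⁻¹ 1 - single g'⁻¹ 1 : MonoidAlgebra k G) ^ p ^ n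
      ∈ commutatorSpan k (MonoidAlgebra k G) := by
    have : ConjClasses.mk (g ^ p ^ n)⁻¹ = ConjClasses.mk (g' ^ p ^ n)⁻¹ :=
      ConjClasses.mk_inv_eq_mk_inv_iff.2 hgg'
    simp [pow_char_pow_mem_commutatorSpan_iff, this]
  simpa [groupForm, mul_sub, coeff_mul_single_apply, sub_eq_zero] using hx _ hy

end KulshammerIdeal

theorem kulshammer_ideal_basis_groupAlgebra_general
    {k : Type*} [Field k] {p : ℕ} [Fact p.Prime] [CharP k p]
    {G : Type*} [Group G] [Fintype G] (n : ℕ) :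
    {x : MonoidAlgebra k G | ∀ y : MonoidAlgebra k G,
        y ^ p ^ n ∈ commutatorSpan k (MonoidAlgebra k G) → groupForm x y = 0}
      = ↑(Submodule.span k (Set.range (classRootSum k p n : ConjClasses G → MonoidAlgebra k G))) ∧
    LinearIndependent k
      (fun C : {C : ConjClasses G // classRootSum k p n C ≠ 0} => classRootSum k p n C.1) := by
  refine ⟨Set.ext fun x => ⟨fun hx => ?_, fun hx y hy => ?_⟩, linearIndependent_classRootSum n⟩
  · exact mem_span_classRootSum_of_factorsThrough n
      (factorsThrough_coeff_of_forall_groupForm_eq_zero n hx)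
  · exact groupForm_eq_zero_of_mem_span
      (Set.forall_mem_range.2 (groupForm_classRootSum_eq_zero n hy)) hx

/-- For a finite group `G` and an algebraically closed field `k` of characteristic `p > 0`,
the Külshammer ideal `T_n^⊥(kG)` is spanned by the elements `(C^{p^{-n}})^+` over the
conjugacy classes `C` of `G`, and the nonzero such elements are linearly independent, i.e.
they form a `k`-basis of `T_n^⊥(kG)`. -/
theorem kulshammer_ideal_basis_groupAlgebra
    {k : Type*} [Field k] [IsAlgClosed k] {p : ℕ} [Fact p.Prime] [CharP k p]
    {G : Type*} [Group G] [Fintype G] (n : ℕ) :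
    {x : MonoidAlgebra k G | ∀ y : MonoidAlgebra k G,
        y ^ p ^ n ∈ commutatorSpan k (MonoidAlgebra k G) → groupForm x y = 0}
      = ↑(Submodule.span k (Set.range (classRootSum k p n : ConjClasses G → MonoidAlgebra k G))) ∧
    LinearIndependent k
      (fun C : {C : ConjClasses G // classRootSum k p n C ≠ 0} => classRootSum k p n C.1) :=
  kulshammer_ideal_basis_groupAlgebra_general n
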